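/- Let F₁ and F₂ be fields containing an algebraically closed field K, and let A, B be finite dimensional K-algebras. Then A ⊗_K F₁ ≅ B ⊗_K F₁ as F₁-algebras if and only if A ⊗_K F₂ ≅ B ⊗_K F₂ as F₂-algebras. -/

import Mathlib

/-!
Both conditions are equivalent to `A ≅ B` over `K`; one direction is base change. Conversely, fix
`K`-bases of `A` and `B` with the same index set. Multiplicativity of the linear map with matrix `M`
is a system of polynomial equations in the entries of `M` whose coefficients, the structure
constants of `A` and `B`, lie in `K`. An isomorphism over `F` is a solution at which `det M` is a
unit. If no `K`-point solves the system with `det M ≠ 0`, the Nullstellensatz puts a power of the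
determinant in the ideal generated by the equations, so it would vanish at the `F`-point.
-/

open TensorProduct MvPolynomial Module

universe u

theorem MvPolynomial.exists_eval_ne_zero_of_isUnit_aeval {K σ F : Type*} [Field K]
    [IsAlgClosed K] [Finite σ] [CommRing F] [Nontrivial F] [Algebra K F]
    (S : Set (MvPolynomial σ K)) (g : MvPolynomial σ K) (x : σ → F)
    (hS : ∀ p ∈ S, aeval x p = 0) (hg : IsUnit (aeval x g)) :
    ∃ y : σ → K, (∀ p ∈ S, eval y p = 0) ∧ eval y g ≠ 0 := by
  by_contra! h
  have hg_rad : g ∈ (Ideal.span S).radical := by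
    rw [← vanishingIdeal_zeroLocus_eq_radical (K := K)]
    exact fun y hy => h y fun p hp => hy p (Ideal.subset_span hp)
  obtain ⟨m, hm⟩ := hg_rad
  have hspan : Ideal.span S ≤ RingHom.ker (aeval x : MvPolynomial σ K →ₐ[K] F) :=
    Ideal.span_le.mpr hS
  exact (hg.pow m).ne_zero (by simpa using hspan hm)

namespace Module.Basis

variable {R ι A : Type*} [CommRing R] [NonUnitalNonAssocRing A] [Module R A]

noncomputable def structureConst (b : Basis ι R A) (i j k : ι) : R :=
  b.repr (b i * b j) k

variable [SMulCommClass R A A] [IsScalarTower R A A]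

theorem repr_mul [Fintype ι] (b : Basis ι R A) (x y : A) (l : ι) :
    b.repr (x * y) l = ∑ p, ∑ q, b.repr x p * b.repr y q * b.structureConst p q l := by
  conv_lhs => rw [← b.sum_repr x, ← b.sum_repr y]
  simp only [Finset.sum_mul, Finset.mul_sum, smul_mul_smul_comm, map_sum, map_smul,
    Finsupp.coe_finsetSum, Finset.sum_apply, Finsupp.coe_smul, Pi.smul_apply, smul_eq_mul,
    structureConst]
  exact Finset.sum_comm

theorem structureConst_baseChange (F : Type*) [CommRing F] [Algebra R F] (b : Basis ι R A)
    (i j k : ι) :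
    (b.baseChange F).structureConst i j k = algebraMap R F (b.structureConst i j k) := by
  simp [structureConst, Algebra.algebraMap_eq_smul_one]

end Module.Basis

namespace Matrix

variable {R S ι : Type*} [CommRing R] [CommRing S] [Fintype ι]

/-- With `α`, `β` the structure constants of bases `a`, `b`, this is the `l`-th coordinate of
`f (a i * a j) - f (a i) * f (a j)` for the linear map `f` with matrix `M`. -/
def mulDefect (α β : ι → ι → ι → R) (M : Matrix ι ι R) (i j l : ι) : R :=
  ∑ k, M l k * α i j k - ∑ p, ∑ q, M p i * M q j * β p q l

theorem _root_.RingHom.map_mulDefect (φ : R →+* S) (α β : ι → ι → ι → R) (M : Matrix ι ι R)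
    (i j l : ι) :
    φ (mulDefect α β M i j l) =
      mulDefect (fun i j k => φ (α i j k)) (fun i j k => φ (β i j k)) (M.map φ) i j l := by
  simp [mulDefect]

theorem aeval_mulDefect_mvPolynomialX {K L : Type*} [CommRing K] [CommRing L] [Algebra K L]
    (α β : ι → ι → ι → K) (M : Matrix ι ι L) (i j l : ι) :
    aeval (fun p : ι × ι => M p.1 p.2)
        (mulDefect (fun i j k => C (α i j k)) (fun i j k => C (β i j k))
          (mvPolynomialX ι ι K) i j l) =
      mulDefect (fun i j k => algebraMap K L (α i j k)) (fun i j k => algebraMap K L (β i j k))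
        M i j l := by
  rw [← AlgHom.coe_toRingHom, RingHom.map_mulDefect]
  simp only [AlgHom.coe_toRingHom, aeval_C]
  congr
  exact mvPolynomialX_map_eval₂ _ M

end Matrix

namespace LinearMap

variable {R ι A B : Type*} [CommRing R]
  [NonUnitalNonAssocRing A] [Module R A] [SMulCommClass R A A] [IsScalarTower R A A]
  [NonUnitalNonAssocRing B] [Module R B] [SMulCommClass R B B] [IsScalarTower R B B]

theorem map_mul_iff_forall_basis (a : Basis ι R A) (f : A →ₗ[R] B) :
    (∀ x y, f (x * y) = f x * f y) ↔ ∀ i j, f (a i * a j) = f (a i) * f (a j) := by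
  refine ⟨fun h i j => h _ _, fun h x y => ?_⟩
  have hbil : (LinearMap.mul R A).compr₂ f = (LinearMap.mul R B).compl₁₂ f f :=
    a.ext fun i => a.ext fun j => by simpa using h i j
  simpa using DFunLike.congr_fun (DFunLike.congr_fun hbil x) y

omit [SMulCommClass R A A] [IsScalarTower R A A] in
theorem map_mul_basis_iff [Fintype ι] [DecidableEq ι] (a : Basis ι R A) (b : Basis ι R B)
    (f : A →ₗ[R] B) (i j : ι) :
    f (a i * a j) = f (a i) * f (a j) ↔
      ∀ l, Matrix.mulDefect a.structureConst b.structureConst (toMatrix a b f) i j l = 0 := by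
  simp only [b.ext_elem_iff, Matrix.mulDefect, sub_eq_zero, b.repr_mul, ← toMatrix_apply]
  rw [← toMatrix_mulVec_repr a b f]
  rfl

theorem map_mul_iff_mulDefect_eq_zero [Fintype ι] [DecidableEq ι] (a : Basis ι R A)
    (b : Basis ι R B) (f : A →ₗ[R] B) :
    (∀ x y, f (x * y) = f x * f y) ↔
      ∀ i j l, Matrix.mulDefect a.structureConst b.structureConst (toMatrix a b f) i j l = 0 := by
  simp only [map_mul_iff_forall_basis a, map_mul_basis_iff a b]

theorem map_mul_baseChange (F : Type*) [CommRing F] [Algebra R F] (f : A →ₗ[R] B)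
    (hf : ∀ x y, f (x * y) = f x * f y) (x y : F ⊗[R] A) :
    f.baseChange F (x * y) = f.baseChange F x * f.baseChange F y := by
  induction x using TensorProduct.induction_on with
  | zero => simp
  | add u v hu hv => simp only [add_mul, map_add, hu, hv]
  | tmul p m =>
    induction y using TensorProduct.induction_on with
    | zero => simp
    | add u v hu hv => simp only [mul_add, map_add, hu, hv]
    | tmul q m' => simp [Algebra.TensorProduct.tmul_mul_tmul, hf]

end LinearMap

section Descent

variable {K F A B : Type*} [Field K] [IsAlgClosed K] [CommRing F] [Nontrivial F] [Algebra K F]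
  [NonUnitalNonAssocRing A] [Module K A] [SMulCommClass K A A] [IsScalarTower K A A]
  [NonUnitalNonAssocRing B] [Module K B] [SMulCommClass K B B] [IsScalarTower K B B]
  [FiniteDimensional K A] [FiniteDimensional K B]

theorem exists_mul_linearEquiv_of_baseChange (e : F ⊗[K] A ≃ₗ[F] F ⊗[K] B)
    (he : ∀ x y, e (x * y) = e x * e y) :
    ∃ f : A ≃ₗ[K] B, ∀ x y, f (x * y) = f x * f y := by
  classical
  have hdim : finrank K B = finrank K A := by
    simpa only [finrank_baseChange] using e.finrank_eq.symm
  let bA := finBasis K A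
  let bB := finBasisOfFinrankEq K B hdim
  let P : _ × _ × _ → MvPolynomial _ K := fun t =>
    Matrix.mulDefect (fun i j k => C (bA.structureConst i j k))
      (fun i j k => C (bB.structureConst i j k)) (Matrix.mvPolynomialX _ _ K) t.1 t.2.1 t.2.2
  let M := LinearMap.toMatrix (bA.baseChange F) (bB.baseChange F) e
  have hM_mul : ∀ p ∈ Set.range P, aeval (fun p => M p.1 p.2) p = 0 := by
    rintro _ ⟨⟨i, j, l⟩, rfl⟩
    rw [Matrix.aeval_mulDefect_mvPolynomialX]
    simp only [← Basis.structureConst_baseChange]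
    exact (LinearMap.map_mul_iff_mulDefect_eq_zero _ _ _).mp he i j l
  have hM_det : IsUnit (aeval (fun p => M p.1 p.2) (Matrix.mvPolynomialX _ _ K).det) := by
    rw [AlgHom.map_det, Matrix.mvPolynomialX_mapMatrix_aeval]
    exact e.isUnit_det _ _
  obtain ⟨y, hyP, hydet⟩ := exists_eval_ne_zero_of_isUnit_aeval _ _ _ hM_mul hM_det
  let N : Matrix _ _ K := Matrix.of fun i j => y (i, j)
  have hN : IsUnit (LinearMap.toMatrix bA bB (Matrix.toLin bA bB N)).det := by
    have hXN : (eval y).mapMatrix (Matrix.mvPolynomialX _ _ K) = N :=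
      Matrix.mvPolynomialX_mapMatrix_eval N
    rw [LinearMap.toMatrix_toLin, isUnit_iff_ne_zero, ← hXN, ← RingHom.map_det]
    exact hydet
  refine ⟨LinearEquiv.ofIsUnitDet hN, ?_⟩
  simp only [LinearEquiv.ofIsUnitDet_apply]
  rw [LinearMap.map_mul_iff_mulDefect_eq_zero bA bB, LinearMap.toMatrix_toLin]
  intro i j l
  convert hyP _ ⟨(i, j, l), rfl⟩ using 1
  exact (Matrix.aeval_mulDefect_mvPolynomialX (K := K) _ _ N i j l).symm

variable (F) in
theorem exists_mul_linearEquiv_baseChange_iff :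
    (∃ e : F ⊗[K] A ≃ₗ[F] F ⊗[K] B, ∀ x y, e (x * y) = e x * e y) ↔
      ∃ f : A ≃ₗ[K] B, ∀ x y, f (x * y) = f x * f y :=
  ⟨fun ⟨e, he⟩ => exists_mul_linearEquiv_of_baseChange e he,
    fun ⟨f, hf⟩ => ⟨f.baseChange K F A B, LinearMap.map_mul_baseChange F f.toLinearMap hf⟩⟩

end Descent

theorem stmt14 (K F₁ F₂ : Type u) [Field K] [IsAlgClosed K]
    [Field F₁] [Algebra K F₁] [Field F₂] [Algebra K F₂]
    (A B : Type u)
    [NonUnitalNonAssocRing A] [Module K A] [SMulCommClass K A A] [IsScalarTower K A A]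
    [NonUnitalNonAssocRing B] [Module K B] [SMulCommClass K B B] [IsScalarTower K B B]
    [FiniteDimensional K A] [FiniteDimensional K B] :
    (∃ e : (F₁ ⊗[K] A) ≃ₗ[F₁] (F₁ ⊗[K] B), ∀ x y, e (x * y) = e x * e y) ↔
      ∃ e : (F₂ ⊗[K] A) ≃ₗ[F₂] (F₂ ⊗[K] B), ∀ x y, e (x * y) = e x * e y :=
  (exists_mul_linearEquiv_baseChange_iff F₁).trans (exists_mul_linearEquiv_baseChange_iff F₂).symm
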